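/- arXiv:1703.09734 — 2 statements merged into one kernel-verified Lean document; each statement's English description precedes it below -/
import Mathlib

section
/- Fix m, κ ∈ ℕ and ν ∈ ℤ. Let 𝔐_κ^m(ν) be the set of tuples (𝔪_1,...,𝔪_κ) with each 𝔪_s ∈ {0,1,...,m+1} such that for every ι = 1,...,κ the number ν·2^{-ι} - Σ_{s=1}^{ι} 𝔪_{κ-s+1}·2^{-(ι-s+1)} is an integer. Then Σ over tuples in 𝔐_κ^m(ν) of the product Π_{s=1}^{κ} 2^{-m} C(m+1, 𝔪_s) equals 1. -/
open scoped Classical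

private lemma choose_parity_sum (n : ℕ) :
    (∑ i ∈ Finset.range (n + 2), (if Even i then ((n+1).choose i : ℤ) else 0) = 2 ^ n) ∧
    (∑ i ∈ Finset.range (n + 2), (if ¬ Even i then ((n+1).choose i : ℤ) else 0) = 2 ^ n) := by
  have hA : ∑ i ∈ Finset.range (n + 2), ((n+1).choose i : ℤ) = 2 ^ (n+1) := by
    exact_mod_cast congrArg (Nat.cast : ℕ → ℤ) (Nat.sum_range_choose (n+1))
  have hB : ∑ i ∈ Finset.range (n + 2), (-1 : ℤ)^i * ((n+1).choose i : ℤ) = 0 :=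
    Int.alternating_sum_range_choose_of_ne (Nat.succ_ne_zero n)
  have hsum : ∑ i ∈ Finset.range (n + 2), (if Even i then ((n+1).choose i : ℤ) else 0)
      + ∑ i ∈ Finset.range (n + 2), (if ¬ Even i then ((n+1).choose i : ℤ) else 0)
      = 2 ^ (n+1) := by
    rw [← Finset.sum_add_distrib, ← hA]
    refine Finset.sum_congr rfl fun i _ => ?_
    by_cases h : Even i <;> simp [h]
  have hdiff : ∑ i ∈ Finset.range (n + 2), (if Even i then ((n+1).choose i : ℤ) else 0)
      - ∑ i ∈ Finset.range (n + 2), (if ¬ Even i then ((n+1).choose i : ℤ) else 0)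
      = 0 := by
    rw [← Finset.sum_sub_distrib]
    refine Eq.trans (Finset.sum_congr rfl fun i _ => ?_) hB
    by_cases h : Even i
    · simp [h, Even.neg_one_pow h]
    · simp [h, Odd.neg_one_pow (Nat.not_even_iff_odd.mp h)]
  have h2 : (2:ℤ)^(n+1) = 2 * 2^n := by ring
  constructor <;> linarith

private lemma parity_sum (m : ℕ) (ν : ℤ) :
    ∑ x : Fin (m + 2),
      (if (∃ z : ℤ, ν - (x : ℕ) = 2 * z) then
        (2:ℝ) ^ (-(m : ℤ)) * ((m + 1).choose (x : ℕ) : ℝ) else 0) = 1 := by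
  rw [Fin.sum_univ_eq_sum_range (fun i : ℕ =>
    if (∃ z : ℤ, ν - (i : ℕ) = 2 * z) then (2:ℝ) ^ (-(m : ℤ)) * ((m + 1).choose i : ℝ) else 0)]
  have hcond : ∀ i : ℕ, (∃ z : ℤ, ν - (i : ℕ) = 2 * z) ↔ (Even ν ↔ Even i) := by
    intro i
    constructor
    · rintro ⟨z, hz⟩
      have : Even (ν - (i:ℤ)) := ⟨z, by omega⟩
      rw [Int.even_sub] at this
      simpa [Int.even_coe_nat] using this
    · intro h
      have : Even (ν - (i:ℤ)) := by
        rw [Int.even_sub]; simpa [Int.even_coe_nat] using h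
      obtain ⟨z, hz⟩ := this
      exact ⟨z, by omega⟩
  have hpow : (2:ℝ) ^ (-(m : ℤ)) * (2:ℝ)^m = 1 := by
    rw [← zpow_natCast (2:ℝ) m, ← zpow_add₀ (two_ne_zero)]
    simp
  by_cases hν : Even ν
  · have : ∀ i ∈ Finset.range (m+2),
        (if (∃ z : ℤ, ν - (i : ℕ) = 2 * z) then (2:ℝ) ^ (-(m : ℤ)) * ((m + 1).choose i : ℝ) else 0)
        = (2:ℝ) ^ (-(m : ℤ)) * (if Even i then ((m + 1).choose i : ℝ) else 0) := by
      intro i _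
      rw [hcond i]
      by_cases h : Even i <;> simp [h, hν]
    rw [Finset.sum_congr rfl this, ← Finset.mul_sum]
    have := (choose_parity_sum m).1
    have hcast : ∑ i ∈ Finset.range (m + 2), (if Even i then ((m+1).choose i : ℝ) else 0)
        = (2:ℝ)^m := by
      have := congrArg (Int.cast : ℤ → ℝ) (choose_parity_sum m).1
      push_cast at this
      simpa using this
    rw [hcast, hpow]
  · have : ∀ i ∈ Finset.range (m+2),
        (if (∃ z : ℤ, ν - (i : ℕ) = 2 * z) then (2:ℝ) ^ (-(m : ℤ)) * ((m + 1).choose i : ℝ) else 0)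
        = (2:ℝ) ^ (-(m : ℤ)) * (if ¬ Even i then ((m + 1).choose i : ℝ) else 0) := by
      intro i _
      rw [hcond i]
      by_cases h : Even i <;> simp [h, hν]
    rw [Finset.sum_congr rfl this, ← Finset.mul_sum]
    have hcast : ∑ i ∈ Finset.range (m + 2), (if ¬ Even i then ((m+1).choose i : ℝ) else 0)
        = (2:ℝ)^m := by
      have := congrArg (Int.cast : ℤ → ℝ) (choose_parity_sum m).2
      push_cast at this
      simpa using this
    rw [hcast, hpow]

private lemma cond_zero (m κ : ℕ) (x : Fin (m+2)) (g : Fin κ → Fin (m+2)) (ν : ℤ) :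
    (∃ z : ℤ, (ν : ℝ) * (2:ℝ) ^ (-((0:ℕ) : ℤ) - 1) -
        ∑ s ∈ Finset.univ.filter (fun s : Fin (κ+1) => (s : ℕ) ≤ 0),
          (((Fin.snoc g x : Fin (κ+1) → Fin (m+2)) s.rev : ℕ) : ℝ) *
            (2:ℝ) ^ (-((0 - (s:ℕ) : ℕ) : ℤ) - 1) = (z : ℝ))
    ↔ ∃ z : ℤ, ν - (x : ℕ) = 2 * z := by
  have hsum : ∑ s ∈ Finset.univ.filter (fun s : Fin (κ+1) => (s : ℕ) ≤ 0),
      (((Fin.snoc g x : Fin (κ+1) → Fin (m+2)) s.rev : ℕ) : ℝ) *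
        (2:ℝ) ^ (-((0 - (s:ℕ) : ℕ) : ℤ) - 1)
      = ((x : ℕ) : ℝ) * (2:ℝ)^(-1 : ℤ) := by
    rw [Finset.sum_filter, Fin.sum_univ_succ]
    simp [Fin.rev_zero, Fin.snoc_last]
  rw [hsum]
  have e1 : (2:ℝ) ^ (-((0:ℕ) : ℤ) - 1) = 2⁻¹ := by norm_num
  have e2 : (2:ℝ) ^ (-1 : ℤ) = 2⁻¹ := by norm_num
  rw [e1, e2]
  constructor
  · rintro ⟨z, hz⟩
    refine ⟨z, ?_⟩
    have h2 : ((ν : ℝ) - ((x:ℕ) : ℝ)) = 2 * (z : ℝ) := by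
      field_simp at hz
      linarith
    exact_mod_cast h2
  · rintro ⟨z, hz⟩
    refine ⟨z, ?_⟩
    have h2 : ((ν : ℝ) - ((x:ℕ) : ℝ)) = 2 * (z : ℝ) := by exact_mod_cast hz
    field_simp
    linarith

private lemma cond_succ (m κ : ℕ) (x : Fin (m+2)) (g : Fin κ → Fin (m+2)) (ν ν' : ℤ)
    (hx : ν = 2 * ν' + (x : ℕ)) (j : ℕ) :
    (∃ z : ℤ, (ν : ℝ) * (2:ℝ) ^ (-((j+1 : ℕ) : ℤ) - 1) -
        ∑ s ∈ Finset.univ.filter (fun s : Fin (κ+1) => (s : ℕ) ≤ j+1),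
          (((Fin.snoc g x : Fin (κ+1) → Fin (m+2)) s.rev : ℕ) : ℝ) *
            (2:ℝ) ^ (-((j+1 - (s:ℕ) : ℕ) : ℤ) - 1) = (z : ℝ))
    ↔ (∃ z : ℤ, (ν' : ℝ) * (2:ℝ) ^ (-(j : ℤ) - 1) -
        ∑ s ∈ Finset.univ.filter (fun s : Fin κ => (s : ℕ) ≤ j),
          ((g s.rev : ℕ) : ℝ) * (2:ℝ) ^ (-((j - (s:ℕ) : ℕ) : ℤ) - 1) = (z : ℝ)) := by
  have key : (ν : ℝ) * (2:ℝ) ^ (-((j+1 : ℕ) : ℤ) - 1) -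
        ∑ s ∈ Finset.univ.filter (fun s : Fin (κ+1) => (s : ℕ) ≤ j+1),
          (((Fin.snoc g x : Fin (κ+1) → Fin (m+2)) s.rev : ℕ) : ℝ) *
            (2:ℝ) ^ (-((j+1 - (s:ℕ) : ℕ) : ℤ) - 1)
      = (ν' : ℝ) * (2:ℝ) ^ (-(j : ℤ) - 1) -
        ∑ s ∈ Finset.univ.filter (fun s : Fin κ => (s : ℕ) ≤ j),
          ((g s.rev : ℕ) : ℝ) * (2:ℝ) ^ (-((j - (s:ℕ) : ℕ) : ℤ) - 1) := by
    have hsplit : ∑ s ∈ Finset.univ.filter (fun s : Fin (κ+1) => (s : ℕ) ≤ j+1),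
        (((Fin.snoc g x : Fin (κ+1) → Fin (m+2)) s.rev : ℕ) : ℝ) *
          (2:ℝ) ^ (-((j+1 - (s:ℕ) : ℕ) : ℤ) - 1)
        = ((x:ℕ) : ℝ) * (2:ℝ) ^ (-((j+1 : ℕ) : ℤ) - 1)
          + ∑ s ∈ Finset.univ.filter (fun s : Fin κ => (s : ℕ) ≤ j),
              ((g s.rev : ℕ) : ℝ) * (2:ℝ) ^ (-((j - (s:ℕ) : ℕ) : ℤ) - 1) := by
      rw [Finset.sum_filter, Fin.sum_univ_succ, Finset.sum_filter]
      congr 1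
      · simp [Fin.rev_zero, Fin.snoc_last]
      · refine Finset.sum_congr rfl fun t _ => ?_
        have h1 : ((t.succ : Fin (κ+1)) : ℕ) = (t : ℕ) + 1 := rfl
        have h2 : (Fin.snoc g x : Fin (κ+1) → Fin (m+2)) t.succ.rev = g t.rev := by
          rw [Fin.rev_succ, Fin.snoc_castSucc]
        have h3 : (j + 1 - ((t:ℕ) + 1)) = j - (t:ℕ) := by omega
        rw [h1, h2, h3]
        by_cases h : (t:ℕ) + 1 ≤ j + 1
        · rw [if_pos h, if_pos (by omega)]
        · rw [if_neg h, if_neg (by omega)]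
    rw [hsplit]
    have hν : (ν : ℝ) = 2 * (ν' : ℝ) + ((x:ℕ) : ℝ) := by exact_mod_cast hx
    have hpow : (2:ℝ) ^ (-(j : ℤ) - 1) = 2 * (2:ℝ) ^ (-((j+1 : ℕ) : ℤ) - 1) := by
      push_cast
      rw [show -((j:ℤ)) - 1 = 1 + (-((j:ℤ)+1) - 1) by ring, zpow_add₀ (two_ne_zero), zpow_one]
    rw [hν, hpow]
    ring
  rw [key]


private lemma forall_range_succ {P : ℕ → Prop} (κ : ℕ) :
    (∀ ι ∈ Finset.range (κ+1), P ι) ↔ (P 0 ∧ ∀ j ∈ Finset.range κ, P (j+1)) := by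
  constructor
  · intro h
    exact ⟨h 0 (Finset.mem_range.mpr (Nat.succ_pos κ)),
      fun j hj => h (j+1) (Finset.mem_range.mpr (Nat.succ_lt_succ (Finset.mem_range.mp hj)))⟩
  · rintro ⟨h0, h⟩ ι hι
    cases ι with
    | zero => exact h0
    | succ j => exact h j (Finset.mem_range.mpr (Nat.lt_of_succ_lt_succ (Finset.mem_range.mp hι)))

/-- The combinatorial identity `𝒜_κ^m(ν) = 1`: the sum over all admissible tuples
`(𝔪_1,…,𝔪_κ)` with `𝔪_s ∈ {0,…,m+1}` (admissible meaning that for every `ι = 1,…,κ`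
the number `ν 2^{-ι} - Σ_{s=1}^{ι} 𝔪_{κ-s+1} 2^{-(ι-s+1)}` is an integer) of the products
`Π_{s=1}^{κ} 2^{-m} C(m+1, 𝔪_s)` equals 1.  A tuple is encoded as `f : Fin κ → Fin (m+2)`
with `𝔪_s = f (s-1)` (0-indexed), so `𝔪_{κ-s+1} = f (Fin.rev (s-1))`. -/
theorem statement2 (m κ : ℕ) (ν : ℤ) :
    ∑ f ∈ Finset.univ.filter (fun f : Fin κ → Fin (m + 2) =>
        ∀ ι ∈ Finset.range κ, ∃ z : ℤ,
          (ν : ℝ) * (2:ℝ) ^ (-(ι : ℤ) - 1) -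
            ∑ s ∈ Finset.univ.filter (fun s : Fin κ => (s : ℕ) ≤ ι),
              ((f s.rev : ℕ) : ℝ) * (2:ℝ) ^ (-((ι - (s : ℕ) : ℕ) : ℤ) - 1) = (z : ℝ)),
      ∏ s : Fin κ, (2:ℝ) ^ (-(m : ℤ)) * ((m + 1).choose (f s : ℕ) : ℝ) = 1 := by
  induction κ generalizing ν with
  | zero => simp
  | succ κ ih =>
    rw [Finset.sum_filter]
    rw [← Equiv.sum_comp (Fin.snocEquiv (fun _ : Fin (κ+1) => Fin (m+2)))]
    rw [Fintype.sum_prod_type]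
    have hsnoc : ∀ (x : Fin (m+2)) (g : Fin κ → Fin (m+2)),
        (Fin.snocEquiv (fun _ : Fin (κ+1) => Fin (m+2))) (x, g)
          = (Fin.snoc g x : Fin (κ+1) → Fin (m+2)) := fun _ _ => rfl
    simp only [hsnoc]
    refine Eq.trans (Finset.sum_congr rfl fun x _ => ?_) (parity_sum m ν)
    by_cases hx : ∃ z : ℤ, ν - (x : ℕ) = 2 * z
    · obtain ⟨ν', hν'⟩ := hx
      have hx0 : ∃ z : ℤ, ν - (x : ℕ) = 2 * z := ⟨ν', hν'⟩
      have hx' : ν = 2 * ν' + (x : ℕ) := by omega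
      rw [if_pos hx0]
      have hcond : ∀ g : Fin κ → Fin (m+2),
          (∀ ι ∈ Finset.range (κ+1), ∃ z : ℤ,
            (ν : ℝ) * (2:ℝ) ^ (-(ι : ℤ) - 1) -
              ∑ s ∈ Finset.univ.filter (fun s : Fin (κ+1) => (s : ℕ) ≤ ι),
                (((Fin.snoc g x : Fin (κ+1) → Fin (m+2)) s.rev : ℕ) : ℝ) *
                  (2:ℝ) ^ (-((ι - (s : ℕ) : ℕ) : ℤ) - 1) = (z : ℝ))
          ↔ (∀ j ∈ Finset.range κ, ∃ z : ℤ,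
            (ν' : ℝ) * (2:ℝ) ^ (-(j : ℤ) - 1) -
              ∑ s ∈ Finset.univ.filter (fun s : Fin κ => (s : ℕ) ≤ j),
                ((g s.rev : ℕ) : ℝ) * (2:ℝ) ^ (-((j - (s : ℕ) : ℕ) : ℤ) - 1) = (z : ℝ)) := by
        intro g
        rw [forall_range_succ, cond_zero m κ x g ν, and_iff_right hx0]
        exact forall₂_congr fun j _ => cond_succ m κ x g ν ν' hx' j
      have hprod : ∀ g : Fin κ → Fin (m+2),
          (∏ s : Fin (κ+1), (2:ℝ) ^ (-(m : ℤ)) *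
              ((m + 1).choose ((Fin.snoc g x : Fin (κ+1) → Fin (m+2)) s : ℕ) : ℝ))
          = ((2:ℝ) ^ (-(m : ℤ)) * ((m + 1).choose (x : ℕ) : ℝ)) *
            ∏ t : Fin κ, (2:ℝ) ^ (-(m : ℤ)) * ((m + 1).choose (g t : ℕ) : ℝ) := by
        intro g
        rw [Fin.prod_univ_castSucc]
        simp only [Fin.snoc_castSucc, Fin.snoc_last]
        ring
      trans (∑ g : Fin κ → Fin (m+2),
          ((2:ℝ) ^ (-(m : ℤ)) * ((m + 1).choose (x : ℕ) : ℝ)) *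
          (if (∀ j ∈ Finset.range κ, ∃ z : ℤ,
            (ν' : ℝ) * (2:ℝ) ^ (-(j : ℤ) - 1) -
              ∑ s ∈ Finset.univ.filter (fun s : Fin κ => (s : ℕ) ≤ j),
                ((g s.rev : ℕ) : ℝ) * (2:ℝ) ^ (-((j - (s : ℕ) : ℕ) : ℤ) - 1) = (z : ℝ))
          then ∏ t : Fin κ, (2:ℝ) ^ (-(m : ℤ)) * ((m + 1).choose (g t : ℕ) : ℝ)
          else 0))
      · refine Finset.sum_congr rfl fun g _ => ?_
        simp only [hcond g, hprod g, mul_ite, mul_zero]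
      · rw [← Finset.mul_sum, ← Finset.sum_filter, ih ν', mul_one]
    · rw [if_neg hx]
      refine Finset.sum_eq_zero fun g _ => ?_
      rw [if_neg]
      intro h
      exact hx ((cond_zero m κ x g ν).mp (h 0 (Finset.mem_range.mpr (Nat.succ_pos κ))))
end

section
/- Let d ∈ ℕ, l ∈ ℤ_{≥0}^d, and ρ, σ, τ ∈ ℝ_+^d. There exists a constant c > 0, depending only on d, l, ρ, σ, τ, such that for every δ ∈ ℝ_+^d, all points x^0, y^0 ∈ ℝ^d with y^0 ∈ x^0 + σ·δ·[-1,1]^d, every set Q ⊂ y^0 + τ·δ·[-1,1]^d, and every polynomial f ∈ 𝒫^{d,l}, sup_{x ∈ Q} |f(x)| ≤ c · max_{λ ∈ ℤ^d, 0 ≤ λ ≤ l} |f(x^0 + ρ·δ·λ)|. -/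
/-!
Interpolating `f` in each variable at the nodes `x⁰ᵢ + ρᵢδᵢλᵢ`, `0 ≤ λᵢ ≤ lᵢ`, writes `f(x)` as
`∑_λ f(x⁰ + ρ·δ·λ) ∏ᵢ Lᵢ,λᵢ(xᵢ)` with one-variable Lagrange basis polynomials `Lᵢ,λᵢ`. The nodes
are `ρᵢδᵢ` apart, and a point of `Q` is within `(σᵢ + τᵢ + ρᵢlᵢ)δᵢ` of each of them, so every
linear factor of `Lᵢ,λᵢ(xᵢ)` is at most `(σᵢ + τᵢ + ρᵢlᵢ)/ρᵢ` in absolute value: the scale `δ`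
cancels, which is why `c` does not depend on it.
-/

open Finset Polynomial

namespace Lagrange

theorem sum_pow_mul_eval_basis {F ι : Type*} [Field F] [DecidableEq ι] {s : Finset ι}
    {v : ι → F} (hvs : Set.InjOn v s) {m : ℕ} (hm : m < #s) (t : F) :
    ∑ k ∈ s, v k ^ m * (Lagrange.basis s v k).eval t = t ^ m := by
  have hdeg : (X ^ m : F[X]).degree < #s := by
    rw [degree_X_pow]; exact_mod_cast hm
  simpa [interpolate_apply, eval_finsetSum] using (congrArg (eval t) (eq_interpolate hvs hdeg)).symm

theorem norm_eval_basis_le {F ι : Type*} [NormedField F] [DecidableEq ι] {s : Finset ι}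
    {v : ι → F} {k : ι} (hk : k ∈ s) {h D : ℝ} (hh : 0 < h)
    (hsep : ∀ j ∈ s, j ≠ k → h ≤ ‖v k - v j‖) {t : F} (hD : ∀ j ∈ s, ‖t - v j‖ ≤ D) :
    ‖(Lagrange.basis s v k).eval t‖ ≤ (D / h) ^ (#s - 1) := by
  rw [Lagrange.basis, eval_prod, norm_prod, ← card_erase_of_mem hk, ← prod_const]
  refine prod_le_prod (fun _ _ => norm_nonneg _) fun j hj => ?_
  obtain ⟨hjk, hjs⟩ := mem_erase.mp hj
  rw [basisDivisor, eval_mul, eval_C, eval_sub, eval_X, eval_C, norm_mul, norm_inv,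
    ← div_eq_inv_mul]
  exact div_le_div₀ ((norm_nonneg _).trans (hD j hjs)) (hD j hjs) hh (hsep j hjs hjk)

theorem abs_eval_basis_equispaced_le {n : ℕ} {a h R t : ℝ} (hh : 0 < h) (ht : |t - a| ≤ R)
    (k : Fin (n + 1)) :
    |(Lagrange.basis univ (fun j : Fin (n + 1) => a + h * ((j : ℕ) : ℝ)) k).eval t| ≤
      ((R + h * n) / h) ^ n := by
  have hsep : ∀ j ∈ (univ : Finset (Fin (n + 1))), j ≠ k →
      h ≤ ‖(a + h * ((k : ℕ) : ℝ)) - (a + h * ((j : ℕ) : ℝ))‖ := by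
    intro j _ hjk
    have hkj : ((k : ℕ) : ℤ) - (j : ℕ) ≠ 0 := by
      rw [sub_ne_zero, Ne, Nat.cast_inj, ← Fin.ext_iff]; exact hjk.symm
    have hone : (1 : ℝ) ≤ |((k : ℕ) : ℝ) - (j : ℕ)| := by exact_mod_cast Int.one_le_abs hkj
    rw [Real.norm_eq_abs, add_sub_add_left_eq_sub, ← mul_sub, abs_mul, abs_of_pos hh]
    nlinarith
  have hD : ∀ j ∈ (univ : Finset (Fin (n + 1))), ‖t - (a + h * ((j : ℕ) : ℝ))‖ ≤ R + h * n := by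
    intro j _
    have hj : ((j : ℕ) : ℝ) ≤ n := by exact_mod_cast Nat.lt_succ_iff.mp j.isLt
    rw [Real.norm_eq_abs, abs_le] at *
    constructor <;> nlinarith [ht.1, ht.2, Nat.cast_nonneg (α := ℝ) j]
  simpa using norm_eval_basis_le (mem_univ k) hh hsep hD

end Lagrange

namespace MvPolynomial

variable {σ : Type*} [Fintype σ] [DecidableEq σ] {κ : σ → Type*} [∀ i, Fintype (κ i)]
  [∀ i, DecidableEq (κ i)]

theorem eval_eq_sum_grid_mul_prod_eval_basis {F : Type*} [Field F]
    {v : (i : σ) → κ i → F} (hv : ∀ i, Function.Injective (v i))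
    {f : MvPolynomial σ F} (hf : ∀ i, f.degreeOf i < Fintype.card (κ i)) (x : σ → F) :
    eval x f = ∑ k : (i : σ) → κ i, eval (fun i => v i (k i)) f *
      ∏ i, (Lagrange.basis univ (v i) (k i)).eval (x i) := by
  have hmonomial : ∀ m ∈ f.support, ∏ i, x i ^ m i =
      ∑ k : (i : σ) → κ i,
        (∏ i, v i (k i) ^ m i) * ∏ i, (Lagrange.basis univ (v i) (k i)).eval (x i) := by
    intro m hm
    have hml : ∀ i, m i < Fintype.card (κ i) :=
      fun i => (monomial_le_degreeOf i hm).trans_lt (hf i)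
    simp_rw [← prod_mul_distrib]
    calc ∏ i, x i ^ m i
        = ∏ i, ∑ k, v i k ^ m i * (Lagrange.basis univ (v i) k).eval (x i) :=
          prod_congr rfl fun i _ =>
            (Lagrange.sum_pow_mul_eval_basis (hv i).injOn (hml i) (x i)).symm
      _ = _ := Fintype.prod_sum _
  rw [eval_eq']
  simp_rw [eval_eq', sum_mul, mul_assoc]
  rw [sum_comm]
  refine sum_congr rfl fun m hm => ?_
  rw [hmonomial m hm, mul_sum]

theorem norm_eval_le_of_norm_eval_basis_le {F : Type*} [NormedField F]
    {v : (i : σ) → κ i → F} (hv : ∀ i, Function.Injective (v i))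
    {f : MvPolynomial σ F} (hf : ∀ i, f.degreeOf i < Fintype.card (κ i)) {x : σ → F}
    {B : σ → ℝ} (hB : ∀ i k, ‖(Lagrange.basis univ (v i) k).eval (x i)‖ ≤ B i) :
    ‖eval x f‖ ≤ (∏ i, Fintype.card (κ i) * B i) *
      ⨆ k : (i : σ) → κ i, ‖eval (fun i => v i (k i)) f‖ := by
  set S := ⨆ k : (i : σ) → κ i, ‖eval (fun i => v i (k i)) f‖
  have hS : ∀ k : (i : σ) → κ i, ‖eval (fun i => v i (k i)) f‖ ≤ S :=
    fun k => Finite.le_ciSup_of_le k le_rfl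
  have hS0 : 0 ≤ S := Real.iSup_nonneg fun _ => norm_nonneg _
  calc ‖eval x f‖
      ≤ ∑ k : (i : σ) → κ i, ‖eval (fun i => v i (k i)) f‖ *
          ∏ i, ‖(Lagrange.basis univ (v i) (k i)).eval (x i)‖ := by
        rw [eval_eq_sum_grid_mul_prod_eval_basis hv hf x]
        refine (norm_sum_le _ _).trans_eq (sum_congr rfl fun k _ => ?_)
        rw [norm_mul, norm_prod]
    _ ≤ ∑ _k : (i : σ) → κ i, S * ∏ i, B i :=
        sum_le_sum fun k _ => mul_le_mul (hS k)
          (prod_le_prod (fun _ _ => norm_nonneg _) fun i _ => hB i (k i))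
          (prod_nonneg fun _ _ => norm_nonneg _) hS0
    _ = (∏ i, Fintype.card (κ i) * B i) * S := by
        rw [sum_const, card_univ, Fintype.card_pi, nsmul_eq_mul, prod_mul_distrib]
        push_cast
        ring

end MvPolynomial

/-- Grid-sampling inequality for polynomials of coordinate degree at most `l`: there is a
constant `c = c(d,l,ρ,σ,τ) > 0` such that for every `δ ∈ ℝ_+^d`, all `x⁰, y⁰` with
`y⁰ ∈ x⁰ + σ·δ·[-1,1]^d`, every set `Q ⊂ y⁰ + τ·δ·[-1,1]^d` and every such polynomial `f`,
`sup_{x ∈ Q} |f(x)| ≤ c · max_{0 ≤ λ ≤ l} |f(x⁰ + ρ·δ·λ)|`. -/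
theorem statement14 (d : ℕ) (l : Fin d → ℕ) (ρ σ τ : Fin d → ℝ)
    (hρ : ∀ i, 0 < ρ i) (hσ : ∀ i, 0 < σ i) (hτ : ∀ i, 0 < τ i) :
    ∃ c > 0, ∀ δ : Fin d → ℝ, (∀ i, 0 < δ i) → ∀ x₀ y₀ : Fin d → ℝ,
      (∀ i, |y₀ i - x₀ i| ≤ σ i * δ i) →
      ∀ Q : Set (Fin d → ℝ), (∀ z ∈ Q, ∀ i, |z i - y₀ i| ≤ τ i * δ i) →
      ∀ f : MvPolynomial (Fin d) ℝ, (∀ i, f.degreeOf i ≤ l i) →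
      ∀ x ∈ Q, |MvPolynomial.eval x f| ≤
        c * ⨆ lam : (j : Fin d) → Fin (l j + 1),
          |MvPolynomial.eval (fun i => x₀ i + ρ i * δ i * ((lam i : ℕ) : ℝ)) f| := by
  have hM : ∀ i, 0 < (σ i + τ i + ρ i * l i) / ρ i := fun i => by
    have := hρ i; have := hσ i; have := hτ i; positivity
  refine ⟨∏ i, ((l i : ℝ) + 1) * ((σ i + τ i + ρ i * l i) / ρ i) ^ l i,
    prod_pos fun i _ => by have := hM i; positivity, ?_⟩
  intro δ hδ x₀ y₀ hy Q hQ f hf x hx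
  have hρδ : ∀ i, 0 < ρ i * δ i := fun i => mul_pos (hρ i) (hδ i)
  have hnodes : ∀ i, Function.Injective fun j : Fin (l i + 1) =>
      x₀ i + ρ i * δ i * ((j : ℕ) : ℝ) := fun i a b hab => by
    simpa [(hρδ i).ne', Fin.ext_iff] using hab
  have hx₀ : ∀ i, |x i - x₀ i| ≤ (σ i + τ i) * δ i := fun i => by
    linarith [abs_sub_le (x i) (y₀ i) (x₀ i), hQ x hx i, hy i]
  have hbasis : ∀ i k, ‖(Lagrange.basis univ (fun j : Fin (l i + 1) =>
      x₀ i + ρ i * δ i * ((j : ℕ) : ℝ)) k).eval (x i)‖ ≤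
        ((σ i + τ i + ρ i * l i) / ρ i) ^ l i := fun i k => by
    have hratio : ((σ i + τ i) * δ i + ρ i * δ i * l i) / (ρ i * δ i) =
        (σ i + τ i + ρ i * l i) / ρ i := by
      field_simp [(hδ i).ne']
    rw [Real.norm_eq_abs, ← hratio]
    exact Lagrange.abs_eval_basis_equispaced_le (hρδ i) (hx₀ i) k
  simpa [Real.norm_eq_abs] using MvPolynomial.norm_eval_le_of_norm_eval_basis_le hnodes
    (fun i => (hf i).trans_lt (by simp)) hbasis
end
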